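/- arXiv:1712.00541 — 2 statements merged into one kernel-verified Lean document; each statement's English description precedes it below -/
import Mathlib

section
/- Let γ : ℝ^d → ℝ be C^1 with γ(t) ≥ c > 0 for all t and with bounded partial derivatives. Then there exists δ₁ > 0 such that for every t ∈ ℝ^d, the map v ↦ v·γ(t − v) is injective on [−δ₁, δ₁]^d. -/
/-!
If `g ≥ c` is `K`-Lipschitz and `g v • v = g w • w`, then `g v • (v - w) = (g w - g v) • w`,
so `c ‖v - w‖ ≤ K ‖v - w‖ ‖w‖`. On a ball of radius `r` with `K r < c` this forces `v = w`.
A bound `M` on `fderiv γ` makes `γ(t - ·)` `M`-Lipschitz for every `t`, and the cube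
`[-δ, δ]^d` lies in the ball of radius `√d δ`, so any `δ` with `M √d δ < c` works.
-/

open Metric

theorem injOn_smul_self_closedBall_of_lipschitzWith {E : Type*} [NormedAddCommGroup E]
    [NormedSpace ℝ E] {g : E → ℝ} {K : NNReal} {c r : ℝ} (hg : LipschitzWith K g)
    (hc : ∀ x, c ≤ g x) (hKr : K * r < c) :
    Set.InjOn (fun v => g v • v) (closedBall 0 r) := by
  intro v _ w hw hvw
  have hw : ‖w‖ ≤ r := mem_closedBall_zero_iff.mp hw
  have hkey : g v • (v - w) = (g w - g v) • w := by
    rw [smul_sub, sub_smul, show g v • v = g w • w from hvw]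
  have hnorm : c * ‖v - w‖ ≤ K * r * ‖v - w‖ :=
    calc c * ‖v - w‖ ≤ ‖g v • (v - w)‖ := by
          rw [norm_smul, Real.norm_eq_abs]
          gcongr
          exact (hc v).trans (le_abs_self _)
      _ = ‖g w - g v‖ * ‖w‖ := by rw [hkey, norm_smul]
      _ ≤ K * ‖v - w‖ * r := by
          gcongr
          · rw [← dist_eq_norm, ← dist_eq_norm, dist_comm]
            exact hg.dist_le_mul v w
      _ = K * r * ‖v - w‖ := by ring
  have : ‖v - w‖ ≤ 0 := by nlinarith [norm_nonneg (v - w)]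
  exact sub_eq_zero.mp (norm_le_zero_iff.mp this)

theorem EuclideanSpace.norm_le_sqrt_card_mul {ι : Type*} [Fintype ι] {v : EuclideanSpace ℝ ι}
    {r : ℝ} (hr : 0 ≤ r) (hv : ∀ i, |v i| ≤ r) : ‖v‖ ≤ √(Fintype.card ι) * r :=
  calc ‖v‖ = √(∑ i, ‖v i‖ ^ 2) := EuclideanSpace.norm_eq v
    _ ≤ √(∑ _i : ι, r ^ 2) := by
        gcongr with i
        exact hv i
    _ = √(Fintype.card ι) * r := by
        rw [Finset.sum_const, Finset.card_univ, nsmul_eq_mul, Real.sqrt_mul (Nat.cast_nonneg _),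
          Real.sqrt_sq hr]

/-- If `γ : ℝ^d → ℝ` is C¹, bounded below by `c > 0`, with bounded first partial
derivatives, then there is `δ₁ > 0` such that `v ↦ γ(t − v) • v` is injective on
`[−δ₁, δ₁]^d`, for every `t`. -/
theorem injOn_scaled_map (d : ℕ) (γ : EuclideanSpace ℝ (Fin d) → ℝ) (c M : ℝ)
    (hc : 0 < c) (hγ : ContDiff ℝ 1 γ) (hlb : ∀ t, c ≤ γ t)
    (hM : ∀ t, ‖fderiv ℝ γ t‖ ≤ M) :
    ∃ δ₁ : ℝ, 0 < δ₁ ∧ ∀ t : EuclideanSpace ℝ (Fin d),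
      Set.InjOn (fun v : EuclideanSpace ℝ (Fin d) => γ (t - v) • v)
        {v : EuclideanSpace ℝ (Fin d) | ∀ i, |v i| ≤ δ₁} := by
  set K := M.toNNReal
  have hlip : LipschitzWith K γ :=
    lipschitzWith_of_nnnorm_fderiv_le (hγ.differentiable one_ne_zero) fun t =>
      by simpa [K, ← NNReal.coe_le_coe] using (hM t).trans (le_max_left M 0)
  obtain ⟨δ₁, hδ₁, hsmall⟩ := exists_pos_mul_lt hc (K * √d)
  refine ⟨δ₁, hδ₁, fun t => ?_⟩
  have hcube : {v : EuclideanSpace ℝ (Fin d) | ∀ i, |v i| ≤ δ₁} ⊆ closedBall 0 (√d * δ₁) :=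
    fun v hv => mem_closedBall_zero_iff.mpr (by
      simpa using EuclideanSpace.norm_le_sqrt_card_mul hδ₁.le hv)
  refine (injOn_smul_self_closedBall_of_lipschitzWith (hlip.comp (IsometryEquiv.subLeft t).isometry.lipschitz)
    (fun v => hlb (t - v)) ?_).mono hcube
  simpa [mul_assoc] using hsmall
end

section
/- Let K : ℝ^d → ℝ be continuous, compactly supported, and γ : ℝ^d → ℝ continuous with c ≤ γ ≤ C, f continuous bounded density. Then for fixed t with f continuous at t and γ continuous at t, h^{−d} ∫ γ^{2d}(s) f(s) K²(h^{−1}γ(s)(t−s)) ds → γ^d(t) f(t) ∫ K²(u) du as h → 0⁺. -/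
/-!
Substituting `s = t - h • v` turns `h^{-d} ∫ γ(s)^{2d} f(s) K(h⁻¹ γ(s) (t - s))² ds` into
`∫ γ(t - h v)^{2d} f(t - h v) K(γ(t - h v) v)² dv`. Since `γ ≥ c > 0`, the integrand vanishes
outside a fixed ball whatever `h` is, so dominated convergence lets `h → 0` inside the integral,
leaving `γ(t)^{2d} f(t) ∫ K(γ(t) v)² dv = γ(t)^d f(t) ∫ K²`.
-/

open MeasureTheory Filter Metric Topology Module

section

variable {E : Type*} [NormedAddCommGroup E] [NormedSpace ℝ E]

lemma inv_smul_smul_sub_sub_smul {h : ℝ} (hh : h ≠ 0) (a : ℝ) (t v : E) :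
    h⁻¹ • (a • (t - (t - h • v))) = a • v := by
  rw [sub_sub_cancel, smul_comm, inv_smul_smul₀ hh]

lemma apply_smul_eq_zero_of_div_lt_norm {L : E → ℝ} {R c a : ℝ} (hc : 0 < c) (hca : c ≤ a)
    (hL : tsupport L ⊆ closedBall 0 R) {v : E} (hv : R / c < ‖v‖) : L (a • v) = 0 := by
  refine image_eq_zero_of_notMem_tsupport fun hmem => ?_
  have h_le : ‖a • v‖ ≤ R := mem_closedBall_zero_iff.1 (hL hmem)
  have h_ge : c * ‖v‖ ≤ ‖a • v‖ := by
    rw [norm_smul, Real.norm_of_nonneg (hc.le.trans hca)]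
    gcongr
  rw [div_lt_iff₀ hc, mul_comm] at hv
  linarith

theorem tendsto_integral_comp_sub_smul_mul [ProperSpace E] [MeasurableSpace E]
    [OpensMeasurableSpace E] (μ : Measure E) [IsFiniteMeasureOnCompacts μ]
    {φ L γ : E → ℝ} {M c : ℝ} (hφ : Continuous φ) (hφM : ∀ x, ‖φ x‖ ≤ M)
    (hL : Continuous L) (hLc : HasCompactSupport L) (hγ : Continuous γ) (hc : 0 < c)
    (hγc : ∀ x, c ≤ γ x) (t : E) :
    Tendsto (fun h : ℝ => ∫ v, φ (t - h • v) * L (γ (t - h • v) • v) ∂μ) (𝓝 0)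
      (𝓝 (φ t * ∫ v, L (γ t • v) ∂μ)) := by
  obtain ⟨R, hR⟩ := hLc.isBounded.subset_closedBall 0
  obtain ⟨B, hB⟩ := hLc.exists_bound_of_continuous hL
  set G : ℝ → E → ℝ := fun h v => φ (t - h • v) * L (γ (t - h • v) • v)
  have hG_bound : ∀ h v, ‖G h v‖ ≤ (closedBall (0 : E) (R / c)).indicator (fun _ => M * B) v := by
    intro h v
    by_cases hv : v ∈ closedBall (0 : E) (R / c)
    · rw [Set.indicator_of_mem hv, norm_mul]
      exact mul_le_mul (hφM _) (hB _) (norm_nonneg _) ((norm_nonneg _).trans (hφM t))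
    · have hv' : R / c < ‖v‖ := by simpa using hv
      simp only [G, Set.indicator_of_notMem hv,
        apply_smul_eq_zero_of_div_lt_norm hc (hγc _) hR hv', mul_zero, norm_zero, le_refl]
  have hG_lim : ∀ v, Tendsto (fun h => G h v) (𝓝 0) (𝓝 (G 0 v)) := fun v =>
    (show Continuous fun h => G h v by fun_prop).tendsto 0
  have h_dct := tendsto_integral_filter_of_dominated_convergence _
    (Eventually.of_forall fun h => (show Continuous (G h) by fun_prop).aestronglyMeasurable)
    (Eventually.of_forall fun h => ae_of_all μ (hG_bound h))
    ((integrableOn_const measure_closedBall_lt_top.ne).integrable_indicator measurableSet_closedBall)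
    (ae_of_all μ hG_lim)
  simpa [G, integral_const_mul] using h_dct

variable [FiniteDimensional ℝ E] [MeasurableSpace E] [BorelSpace E] (μ : Measure E)
  [μ.IsAddHaarMeasure] {F : Type*} [NormedAddCommGroup F] [NormedSpace ℝ F]

theorem integral_comp_sub_smul_of_pos (g : E → F) (t : E) {h : ℝ} (hh : 0 < h) :
    ∫ v, g (t - h • v) ∂μ = (h ^ finrank ℝ E)⁻¹ • ∫ s, g s ∂μ := by
  rw [μ.integral_comp_smul_of_nonneg (fun w => g (t - w)) h (hR := hh.le),
    integral_sub_left_eq_self g μ t]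

end

theorem second_moment_leading_term_general (d : ℕ)
    (K f γ : EuclideanSpace ℝ (Fin d) → ℝ) (c C : ℝ) (hc : 0 < c)
    (hK : Continuous K) (hKc : HasCompactSupport K)
    (hγc : Continuous γ) (hγ : ∀ x, c ≤ γ x ∧ γ x ≤ C)
    (hf : Continuous f) (hfb : ∃ M, ∀ x, f x ≤ M) (hf0 : ∀ x, 0 ≤ f x)
    (t : EuclideanSpace ℝ (Fin d)) :
    Tendsto (fun h : ℝ =>
        (h ^ d)⁻¹ * ∫ s : EuclideanSpace ℝ (Fin d),
          (γ s) ^ (2 * d) * f s * (K (h⁻¹ • (γ s • (t - s)))) ^ 2)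
      (nhdsWithin 0 (Set.Ioi 0))
      (nhds ((γ t) ^ d * f t * ∫ u : EuclideanSpace ℝ (Fin d), (K u) ^ 2)) := by
  obtain ⟨M, hM⟩ := hfb
  have hdim : finrank ℝ (EuclideanSpace ℝ (Fin d)) = d := finrank_euclideanSpace_fin
  have hγt : 0 < γ t := hc.trans_le (hγ t).1
  have hweight : ∀ s, ‖γ s ^ (2 * d) * f s‖ ≤ C ^ (2 * d) * M := fun s => by
    have hγs : 0 ≤ γ s := hc.le.trans (hγ s).1
    rw [Real.norm_of_nonneg (mul_nonneg (pow_nonneg hγs _) (hf0 s))]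
    exact mul_le_mul (pow_le_pow_left₀ hγs (hγ s).2 _) (hM s) (hf0 s)
      (pow_nonneg (hγs.trans (hγ s).2) _)
  have hlim := tendsto_integral_comp_sub_smul_mul volume (φ := fun s => γ s ^ (2 * d) * f s)
    (L := fun u => K u ^ 2) (by fun_prop) hweight (by fun_prop)
    (hKc.comp_left (g := fun x : ℝ => x ^ 2) (zero_pow two_ne_zero)) hγc hc (fun x => (hγ x).1) t
  have hlimit : γ t ^ (2 * d) * f t * ∫ v, K (γ t • v) ^ 2 = γ t ^ d * f t * ∫ u, K u ^ 2 := by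
    rw [volume.integral_comp_smul_of_nonneg (fun u => K u ^ 2) (γ t) (hR := hγt.le), hdim,
      smul_eq_mul, two_mul, pow_add]
    field_simp
  rw [hlimit] at hlim
  refine (hlim.mono_left nhdsWithin_le_nhds).congr' ?_
  filter_upwards [self_mem_nhdsWithin] with h (hh : 0 < h)
  have hsubst := integral_comp_sub_smul_of_pos volume
    (fun s => γ s ^ (2 * d) * f s * K (h⁻¹ • (γ s • (t - s))) ^ 2) t hh
  rw [hdim, smul_eq_mul] at hsubst
  simp only [← hsubst, inv_smul_smul_sub_sub_smul hh.ne']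

/-- Leading term of the second moment expansion:
`h^{−d} ∫ γ^{2d}(s) f(s) K²(h⁻¹γ(s)(t−s)) ds → γ^d(t) f(t) ∫ K²` as `h → 0⁺`. -/
theorem second_moment_leading_term (d : ℕ) (hd : 1 ≤ d)
    (K f γ : EuclideanSpace ℝ (Fin d) → ℝ) (c C : ℝ) (hc : 0 < c)
    (hK : Continuous K) (hKc : HasCompactSupport K)
    (hγc : Continuous γ) (hγ : ∀ x, c ≤ γ x ∧ γ x ≤ C)
    (hf : Continuous f) (hfb : ∃ M, ∀ x, f x ≤ M) (hf0 : ∀ x, 0 ≤ f x)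
    (hf1 : ∫ x, f x = 1) (t : EuclideanSpace ℝ (Fin d)) :
    Tendsto (fun h : ℝ =>
        (h ^ d)⁻¹ * ∫ s : EuclideanSpace ℝ (Fin d),
          (γ s) ^ (2 * d) * f s * (K (h⁻¹ • (γ s • (t - s)))) ^ 2)
      (nhdsWithin 0 (Set.Ioi 0))
      (nhds ((γ t) ^ d * f t * ∫ u : EuclideanSpace ℝ (Fin d), (K u) ^ 2)) :=
  second_moment_leading_term_general d K f γ c C hc hK hKc hγc hγ hf hfb hf0 t
end
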